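/- Let w0, x0, y0, z0 ∈ ℂ satisfy w0²z0² − x0²y0² ≠ 0, w0²x0² − y0²z0² ≠ 0, w0²y0² − x0²z0² ≠ 0, and define A = (w0⁴−x0⁴−y0⁴+z0⁴)/(w0²z0²−x0²y0²), B = (w0⁴+x0⁴−y0⁴−z0⁴)/(w0²x0²−y0²z0²), C = (w0⁴−x0⁴+y0⁴−z0⁴)/(w0²y0²−x0²z0²), D = w0x0y0z0·∏_{ε,ε'∈{±1}}(w0²+εx0²+ε'y0²+εε'z0²) / [(w0²z0²−x0²y0²)(w0²x0²−y0²z0²)(w0²y0²−x0²z0²)]. Let F be the Hudson quartic with these parameters. Then each of the sixteen points (w0,x0,y0,z0), (−w0,−x0,y0,z0), (−w0,x0,−y0,z0), (−w0,x0,y0,−z0), (x0,w0,z0,y0), (−x0,−w0,z0,y0), (−x0,w0,−z0,y0), (−x0,w0,z0,−y0), (y0,z0,w0,x0), (−y0,−z0,w0,x0), (−y0,z0,−w0,x0), (−y0,z0,w0,−x0), (z0,y0,x0,w0), (−z0,−y0,x0,w0), (−z0,y0,−x0,w0), (−z0,y0,x0,−w0) is a singular point of the quartic surface F = 0; that is,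 F and all four partial derivatives ∂F/∂w, ∂F/∂x, ∂F/∂y, ∂F/∂z vanish at each of these points. -/

import Mathlib

/-!
The Klein four-group of double transpositions of the coordinates and the sign changes of an
even number of coordinates preserve `F`; they permute the four partial derivatives (up to sign),
hence map singular points to singular points, and the sixteen points are the orbit of `(w0, x0, y0, z0)` under the group of order 16 they generate.
By Euler's identity `4F = w ∂F/∂w + x ∂F/∂x + y ∂F/∂y + z ∂F/∂z`, a singular point is just a
common zero of the four partials, and at `(w0, x0, y0, z0)` these are four linear equations in
`A, B, C, D` whose solution is exactly the prescribed one.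
-/

noncomputable def hudsonQ (A B C D w x y z : ℂ) : ℂ :=
  w^4 + x^4 + y^4 + z^4 + 2*D*w*x*y*z - A*(w^2*z^2 + x^2*y^2)
    - B*(w^2*x^2 + y^2*z^2) - C*(w^2*y^2 + x^2*z^2)

def hudsonQPartialW (A B C D w x y z : ℂ) : ℂ :=
  4*w^3 - 2*w*(A*z^2 + B*x^2 + C*y^2) + 2*D*x*y*z

theorem deriv_hudsonQ_fst (A B C D w x y z : ℂ) :
    deriv (fun t => hudsonQ A B C D t x y z) w = hudsonQPartialW A B C D w x y z := by
  have hQ : (fun t => hudsonQ A B C D t x y z) = fun t =>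
      t^4 - (A*z^2 + B*x^2 + C*y^2) * t^2 + 2*D*x*y*z * t + hudsonQ A B C D 0 x y z := by
    funext t; unfold hudsonQ; ring
  rw [hQ]
  refine (((((hasDerivAt_pow 4 w).sub ((hasDerivAt_pow 2 w).const_mul _)).add
    ((hasDerivAt_id w).const_mul _)).add_const _).congr_deriv ?_).deriv
  simp only [hudsonQPartialW]
  push_cast
  ring

theorem hudsonQ_euler (A B C D w x y z : ℂ) :
    4 * hudsonQ A B C D w x y z =
      w * hudsonQPartialW A B C D w x y z + x * hudsonQPartialW A B C D x w z y
        + y * hudsonQPartialW A B C D y z w x + z * hudsonQPartialW A B C D z y x w := by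
  unfold hudsonQ hudsonQPartialW
  ring

theorem hudsonQPartialW_mul_signs (A B C D w x y z : ℂ) {a b c d : ℂ}
    (ha : a^2 = 1) (hb : b^2 = 1) (hc : c^2 = 1) (hd : d^2 = 1) (habcd : a*b*c*d = 1) :
    hudsonQPartialW A B C D (a*w) (b*x) (c*y) (d*z) = a * hudsonQPartialW A B C D w x y z := by
  unfold hudsonQPartialW
  linear_combination (4*a*w^3 - 2*D*b*c*d*x*y*z) * ha - 2*a*w*B*x^2 * hb - 2*a*w*C*y^2 * hc
    - 2*a*w*A*z^2 * hd + 2*D*a*x*y*z * habcd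

def IsHudsonNode (A B C D : ℂ) (p : ℂ × ℂ × ℂ × ℂ) : Prop :=
  hudsonQ A B C D p.1 p.2.1 p.2.2.1 p.2.2.2 = 0 ∧
    deriv (fun t => hudsonQ A B C D t p.2.1 p.2.2.1 p.2.2.2) p.1 = 0 ∧
    deriv (fun t => hudsonQ A B C D p.1 t p.2.2.1 p.2.2.2) p.2.1 = 0 ∧
    deriv (fun t => hudsonQ A B C D p.1 p.2.1 t p.2.2.2) p.2.2.1 = 0 ∧
    deriv (fun t => hudsonQ A B C D p.1 p.2.1 p.2.2.1 t) p.2.2.2 = 0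

section

variable {A B C D w x y z : ℂ}

theorem isHudsonNode_iff :
    IsHudsonNode A B C D (w, x, y, z) ↔
      hudsonQPartialW A B C D w x y z = 0 ∧ hudsonQPartialW A B C D x w z y = 0 ∧
        hudsonQPartialW A B C D y z w x = 0 ∧ hudsonQPartialW A B C D z y x w = 0 := by
  have swap_x : (fun t => hudsonQ A B C D w t y z) = fun t => hudsonQ A B C D t w z y := by
    funext t; unfold hudsonQ; ring
  have swap_y : (fun t => hudsonQ A B C D w x t z) = fun t => hudsonQ A B C D t z w x := by
    funext t; unfold hudsonQ; ring
  have swap_z : (fun t => hudsonQ A B C D w x y t) = fun t => hudsonQ A B C D t y x w := by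
    funext t; unfold hudsonQ; ring
  rw [IsHudsonNode, swap_x, swap_y, swap_z]
  simp only [deriv_hudsonQ_fst]
  refine ⟨fun h => h.2, fun h => ⟨?_, h⟩⟩
  obtain ⟨hw, hx, hy, hz⟩ := h
  simpa [hw, hx, hy, hz] using hudsonQ_euler A B C D w x y z

theorem IsHudsonNode.klein (h : IsHudsonNode A B C D (w, x, y, z)) :
    IsHudsonNode A B C D (x, w, z, y) ∧ IsHudsonNode A B C D (y, z, w, x) ∧
      IsHudsonNode A B C D (z, y, x, w) := by
  simp only [isHudsonNode_iff] at h ⊢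
  tauto

theorem IsHudsonNode.mul_signs {a b c d : ℂ} (h : IsHudsonNode A B C D (w, x, y, z))
    (ha : a^2 = 1) (hb : b^2 = 1) (hc : c^2 = 1) (hd : d^2 = 1) (habcd : a*b*c*d = 1) :
    IsHudsonNode A B C D (a*w, b*x, c*y, d*z) := by
  obtain ⟨hw, hx, hy, hz⟩ := isHudsonNode_iff.1 h
  refine isHudsonNode_iff.2 ⟨?_, ?_, ?_, ?_⟩
  · rw [hudsonQPartialW_mul_signs _ _ _ _ _ _ _ _ ha hb hc hd habcd, hw, mul_zero]
  · rw [hudsonQPartialW_mul_signs _ _ _ _ _ _ _ _ hb ha hd hc (by linear_combination habcd), hx,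
      mul_zero]
  · rw [hudsonQPartialW_mul_signs _ _ _ _ _ _ _ _ hc hd ha hb (by linear_combination habcd), hy,
      mul_zero]
  · rw [hudsonQPartialW_mul_signs _ _ _ _ _ _ _ _ hd hc hb ha (by linear_combination habcd), hz,
      mul_zero]

theorem IsHudsonNode.neg_pairs (h : IsHudsonNode A B C D (w, x, y, z)) :
    IsHudsonNode A B C D (-w, -x, y, z) ∧ IsHudsonNode A B C D (-w, x, -y, z) ∧
      IsHudsonNode A B C D (-w, x, y, -z) := by
  refine ⟨?_, ?_, ?_⟩
  · simpa using h.mul_signs (a := -1) (b := -1) (c := 1) (d := 1)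
      (by norm_num) (by norm_num) (by norm_num) (by norm_num) (by norm_num)
  · simpa using h.mul_signs (a := -1) (b := 1) (c := -1) (d := 1)
      (by norm_num) (by norm_num) (by norm_num) (by norm_num) (by norm_num)
  · simpa using h.mul_signs (a := -1) (b := 1) (c := 1) (d := -1)
      (by norm_num) (by norm_num) (by norm_num) (by norm_num) (by norm_num)

theorem isHudsonNode_of_params
    (h1 : w^2*z^2 - x^2*y^2 ≠ 0) (h2 : w^2*x^2 - y^2*z^2 ≠ 0) (h3 : w^2*y^2 - x^2*z^2 ≠ 0)
    (hA : A = (w^4 - x^4 - y^4 + z^4) / (w^2*z^2 - x^2*y^2))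
    (hB : B = (w^4 + x^4 - y^4 - z^4) / (w^2*x^2 - y^2*z^2))
    (hC : C = (w^4 - x^4 + y^4 - z^4) / (w^2*y^2 - x^2*z^2))
    (hD : D = w*x*y*z *
          ((w^2 + x^2 + y^2 + z^2) * (w^2 + x^2 - y^2 - z^2) *
           (w^2 - x^2 + y^2 - z^2) * (w^2 - x^2 - y^2 + z^2)) /
          ((w^2*z^2 - x^2*y^2) * (w^2*x^2 - y^2*z^2) * (w^2*y^2 - x^2*z^2))) :
    IsHudsonNode A B C D (w, x, y, z) := by
  have hk := mul_ne_zero (mul_ne_zero h1 h2) h3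
  have hA' : A * (w^2*z^2 - x^2*y^2) = w^4 - x^4 - y^4 + z^4 := by
    rw [hA, div_mul_cancel₀ _ h1]
  have hB' : B * (w^2*x^2 - y^2*z^2) = w^4 + x^4 - y^4 - z^4 := by
    rw [hB, div_mul_cancel₀ _ h2]
  have hC' : C * (w^2*y^2 - x^2*z^2) = w^4 - x^4 + y^4 - z^4 := by
    rw [hC, div_mul_cancel₀ _ h3]
  have hD' : D * ((w^2*z^2 - x^2*y^2) * (w^2*x^2 - y^2*z^2) * (w^2*y^2 - x^2*z^2)) =
      w*x*y*z * ((w^2 + x^2 + y^2 + z^2) * (w^2 + x^2 - y^2 - z^2) *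
        (w^2 - x^2 + y^2 - z^2) * (w^2 - x^2 - y^2 + z^2)) := by
    rw [hD, div_mul_cancel₀ _ hk]
  refine isHudsonNode_iff.2 ⟨mul_right_cancel₀ hk ?_, mul_right_cancel₀ hk ?_,
    mul_right_cancel₀ hk ?_, mul_right_cancel₀ hk ?_⟩ <;> unfold hudsonQPartialW
  · linear_combination (-2*w*z^2 * ((w^2*x^2 - y^2*z^2) * (w^2*y^2 - x^2*z^2))) * hA'
      + (-2*w*x^2 * ((w^2*z^2 - x^2*y^2) * (w^2*y^2 - x^2*z^2))) * hB'
      + (-2*w*y^2 * ((w^2*z^2 - x^2*y^2) * (w^2*x^2 - y^2*z^2))) * hC' + (2*x*y*z) * hD'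
  · linear_combination (-2*x*y^2 * ((w^2*x^2 - y^2*z^2) * (w^2*y^2 - x^2*z^2))) * hA'
      + (-2*x*w^2 * ((w^2*z^2 - x^2*y^2) * (w^2*y^2 - x^2*z^2))) * hB'
      + (-2*x*z^2 * ((w^2*z^2 - x^2*y^2) * (w^2*x^2 - y^2*z^2))) * hC' + (2*w*y*z) * hD'
  · linear_combination (-2*y*x^2 * ((w^2*x^2 - y^2*z^2) * (w^2*y^2 - x^2*z^2))) * hA'
      + (-2*y*z^2 * ((w^2*z^2 - x^2*y^2) * (w^2*y^2 - x^2*z^2))) * hB'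
      + (-2*y*w^2 * ((w^2*z^2 - x^2*y^2) * (w^2*x^2 - y^2*z^2))) * hC' + (2*w*x*z) * hD'
  · linear_combination (-2*z*w^2 * ((w^2*x^2 - y^2*z^2) * (w^2*y^2 - x^2*z^2))) * hA'
      + (-2*z*y^2 * ((w^2*z^2 - x^2*y^2) * (w^2*y^2 - x^2*z^2))) * hB'
      + (-2*z*x^2 * ((w^2*z^2 - x^2*y^2) * (w^2*x^2 - y^2*z^2))) * hC' + (2*w*x*y) * hD'

end

/-- The sixteen listed points are singular points (nodes) of the Hudson quartic
surface `F = 0` with parameters `A, B, C, D` built from `w0, x0, y0, z0`: the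
quartic and all four of its partial derivatives vanish at each of them. -/
theorem hudson_sixteen_nodes (w0 x0 y0 z0 A B C D : ℂ)
    (h1 : w0^2*z0^2 - x0^2*y0^2 ≠ 0)
    (h2 : w0^2*x0^2 - y0^2*z0^2 ≠ 0)
    (h3 : w0^2*y0^2 - x0^2*z0^2 ≠ 0)
    (hA : A = (w0^4 - x0^4 - y0^4 + z0^4) / (w0^2*z0^2 - x0^2*y0^2))
    (hB : B = (w0^4 + x0^4 - y0^4 - z0^4) / (w0^2*x0^2 - y0^2*z0^2))
    (hC : C = (w0^4 - x0^4 + y0^4 - z0^4) / (w0^2*y0^2 - x0^2*z0^2))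
    (hD : D = w0*x0*y0*z0 *
          ((w0^2 + x0^2 + y0^2 + z0^2) * (w0^2 + x0^2 - y0^2 - z0^2) *
           (w0^2 - x0^2 + y0^2 - z0^2) * (w0^2 - x0^2 - y0^2 + z0^2)) /
          ((w0^2*z0^2 - x0^2*y0^2) * (w0^2*x0^2 - y0^2*z0^2) * (w0^2*y0^2 - x0^2*z0^2))) :
    ∀ p : ℂ × ℂ × ℂ × ℂ,
      p ∈ ([(w0, x0, y0, z0), (-w0, -x0, y0, z0), (-w0, x0, -y0, z0), (-w0, x0, y0, -z0),
            (x0, w0, z0, y0), (-x0, -w0, z0, y0), (-x0, w0, -z0, y0), (-x0, w0, z0, -y0),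
            (y0, z0, w0, x0), (-y0, -z0, w0, x0), (-y0, z0, -w0, x0), (-y0, z0, w0, -x0),
            (z0, y0, x0, w0), (-z0, -y0, x0, w0), (-z0, y0, -x0, w0), (-z0, y0, x0, -w0)] :
            List (ℂ × ℂ × ℂ × ℂ)) →
      hudsonQ A B C D p.1 p.2.1 p.2.2.1 p.2.2.2 = 0 ∧
      deriv (fun t => hudsonQ A B C D t p.2.1 p.2.2.1 p.2.2.2) p.1 = 0 ∧
      deriv (fun t => hudsonQ A B C D p.1 t p.2.2.1 p.2.2.2) p.2.1 = 0 ∧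
      deriv (fun t => hudsonQ A B C D p.1 p.2.1 t p.2.2.2) p.2.2.1 = 0 ∧
      deriv (fun t => hudsonQ A B C D p.1 p.2.1 p.2.2.1 t) p.2.2.2 = 0 := by
  have n₀ := isHudsonNode_of_params h1 h2 h3 hA hB hC hD
  obtain ⟨n₁, n₂, n₃⟩ := n₀.klein
  obtain ⟨n₀₁, n₀₂, n₀₃⟩ := n₀.neg_pairs
  obtain ⟨n₁₁, n₁₂, n₁₃⟩ := n₁.neg_pairs
  obtain ⟨n₂₁, n₂₂, n₂₃⟩ := n₂.neg_pairs
  obtain ⟨n₃₁, n₃₂, n₃₃⟩ := n₃.neg_pairs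
  intro p hp
  fin_cases hp <;> assumption
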